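/- arXiv:2202.06031 — 2 statements merged into one kernel-verified Lean document; each statement's English description precedes it below -/
import Mathlib

section
/- For any complex abelian variety A, the reduced degree of End_Q(A) satisfies [End_Q(A) : Q]_red ≤ 2·dim_C A. -/
/-- A complex abelian variety, modeled as a complex torus `V/L`: a
finite-dimensional complex vector space `V` together with a full lattice `L`
(a discrete cocompact subgroup, i.e. a free `ℤ`-submodule of rank `2 dim V`
spanning `V` over `ℝ`).  The polarization plays no role in the statements
below and is not recorded. -/
structure CAbVar where
  V : Type
  [grp : AddCommGroup V]
  [modR : Module ℝ V]
  [modC : Module ℂ V]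
  [tower : IsScalarTower ℝ ℂ V]
  [findim : FiniteDimensional ℂ V]
  L : Submodule ℤ V
  spans : Submodule.span ℝ (L : Set V) = ⊤
  free : Module.Free ℤ L
  rank_eq : Module.finrank ℤ L = 2 * Module.finrank ℂ V

attribute [instance] CAbVar.grp CAbVar.modR CAbVar.modC CAbVar.tower CAbVar.findim

namespace CAbVar

/-- The (complex) dimension of the abelian variety. -/
noncomputable def dim (A : CAbVar) : ℕ := Module.finrank ℂ A.V

/-- `f` belongs to `End_ℚ(A) = End(A) ⊗ ℚ`: some positive integer multiple of
`f` is an endomorphism of `A`, i.e. preserves the lattice. -/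
def IsEndQ (A : CAbVar) (f : Module.End ℂ A.V) : Prop :=
  ∃ n : ℕ, 0 < n ∧ ∀ v ∈ A.L, (n • f) v ∈ A.L

/-- A complex subtorus (equivalently, for an abelian variety, an abelian
subvariety): a complex subspace meeting the lattice in a full lattice of the
subspace. -/
def IsSubtorus (A : CAbVar) (W : Submodule ℂ A.V) : Prop :=
  Submodule.span ℝ ((W : Set A.V) ∩ (A.L : Set A.V)) = W.restrictScalars ℝ

/-- A simple abelian variety: nonzero, and with no nontrivial abelian
subvariety. -/
def Simple (A : CAbVar) : Prop :=
  0 < A.dim ∧ ∀ W : Submodule ℂ A.V, IsSubtorus A W → W = ⊥ ∨ W = ⊤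

/-- `A` is isotypic: isogenous to a power `B^n` of a simple abelian variety
`B` (an isogeny of complex tori is a complex linear isomorphism of universal
covers carrying one lattice into the other). -/
def Isotypic (A : CAbVar) : Prop :=
  ∃ B : CAbVar, Simple B ∧ ∃ n : ℕ, 0 < n ∧
    ∃ f : A.V ≃ₗ[ℂ] (Fin n → B.V),
      ∀ v ∈ A.L, ∀ i : Fin n, f v i ∈ B.L

end CAbVar

/-- A finite-dimensional commutative `ℚ`-subalgebra of `End_ℚ(A)`, presented
abstractly.  It is étale iff `E` is moreover reduced. -/
structure QSubalg (A : CAbVar) where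
  E : Type
  [ring : CommRing E]
  [alg : Algebra ℚ E]
  [findim : FiniteDimensional ℚ E]
  ψ : E →+* Module.End ℂ A.V
  inj : Function.Injective ψ
  mem : ∀ x : E, A.IsEndQ (ψ x)

attribute [instance] QSubalg.ring QSubalg.alg QSubalg.findim

/-!
`E` acts faithfully on `H₁(A, ℚ)`, the `ℚ`-span of the period lattice `L`, which has dimension
`rank L = 2 dim A`: an element killing `L` kills its complex span `V`, and the action preserves
the `ℚ`-span because a positive multiple of each element preserves `L`. A reduced commutative
finite-dimensional `ℚ`-algebra is a finite product of fields `E ⧸ 𝔪`, and a faithful `E`-module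
`M` contains the independent family of its `𝔪`-torsion submodules `M[𝔪]`, each a nonzero
`E ⧸ 𝔪`-vector space. Hence `dim_ℚ E = ∑ [E ⧸ 𝔪 : ℚ] ≤ ∑ dim_ℚ M[𝔪] ≤ dim_ℚ M`.
-/

open Module Submodule

theorem Module.finrank_le_finrank_of_nontrivial (K L M : Type*) [Field K] [DivisionRing L]
    [Algebra K L] [AddCommGroup M] [Module K M] [Module L M] [IsScalarTower K L M]
    [FiniteDimensional K M] [Nontrivial M] :
    finrank K L ≤ finrank K M := by
  have : Module.Finite L M := .of_restrictScalars_finite K L M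
  calc finrank K L ≤ finrank K L * finrank L M := Nat.le_mul_of_pos_right _ finrank_pos
    _ = finrank K M := finrank_mul_finrank K L M

instance Submodule.finiteDimensional_of_isScalarTower {K E M : Type*} [Field K] [Ring E]
    [Algebra K E] [AddCommGroup M] [Module K M] [Module E M] [IsScalarTower K E M]
    [FiniteDimensional K M] (p : Submodule E M) : FiniteDimensional K p :=
  .of_injective (p.subtype.restrictScalars K) Subtype.val_injective

theorem iSupIndep.sum_finrank_le {K E M ι : Type*} [Field K] [Ring E] [Algebra K E]
    [AddCommGroup M] [Module K M] [Module E M] [IsScalarTower K E M] [FiniteDimensional K M]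
    [Fintype ι] [DecidableEq ι] {p : ι → Submodule E M} (hp : iSupIndep p) :
    ∑ i, finrank K (p i) ≤ finrank K M := by
  rw [← finrank_directSum]
  exact ((DirectSum.coeLinearMap p).restrictScalars K).finrank_le_finrank_of_injective
    hp.dfinsupp_lsum_injective

section TorsionByMaximal

variable {E M : Type*} [CommRing E] [AddCommGroup M] [Module E M]

theorem MaximalSpectrum.iSupIndep_torsionBySet :
    iSupIndep fun I : MaximalSpectrum E => torsionBySet E M I.asIdeal := by
  classical
  exact iSupIndep_iff_supIndep.mpr fun _ => supIndep_torsionBySet_ideal fun _ _ _ _ hIJ =>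
    Ideal.isCoprime_iff_sup_eq.mp (MaximalSpectrum.isCoprime_of_ne hIJ)

theorem MaximalSpectrum.torsionBySet_ne_bot [IsArtinianRing E] [IsReduced E] [FaithfulSMul E M]
    (I : MaximalSpectrum E) : torsionBySet E M I.asIdeal ≠ ⊥ := by
  classical
  let e := IsArtinianRing.equivPi E
  let u := e.symm (Pi.single I 1)
  have hu0 : u ≠ 0 := by simp [u]
  have hIu : ∀ x ∈ I.asIdeal, x * u = 0 := fun x hx => e.injective <| by
    rw [map_mul, map_zero, e.apply_symm_apply, ← Pi.single_mul_right, mul_one,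
      IsArtinianRing.equivPi_apply, Ideal.Quotient.eq_zero_iff_mem.mpr hx, Pi.single_zero]
  intro hbot
  refine hu0 (eq_of_smul_eq_smul (α := M) fun m => ?_)
  have : u • m ∈ torsionBySet E M I.asIdeal := (mem_torsionBySet_iff _ _).mpr fun x => by
    rw [smul_smul, hIu x x.2, zero_smul]
  simpa [hbot] using this

end TorsionByMaximal

theorem finrank_le_finrank_of_faithfulSMul (K E M : Type*) [Field K] [CommRing E] [IsReduced E]
    [Algebra K E] [FiniteDimensional K E] [AddCommGroup M] [Module K M] [Module E M]
    [IsScalarTower K E M] [FiniteDimensional K M] [FaithfulSMul E M] :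
    finrank K E ≤ finrank K M := by
  classical
  have : IsArtinianRing E := .of_finite K E
  have : Fintype (MaximalSpectrum E) := .ofFinite _
  let _ (I : MaximalSpectrum E) : Field (E ⧸ I.asIdeal) := Ideal.Quotient.field I.asIdeal
  have (I : MaximalSpectrum E) : Nontrivial (torsionBySet E M I.asIdeal) :=
    nontrivial_iff_ne_bot.mpr I.torsionBySet_ne_bot
  calc finrank K E = ∑ I : MaximalSpectrum E, finrank K (E ⧸ I.asIdeal) := by
        rw [((IsArtinianRing.equivPi E).toLinearEquiv.restrictScalars K).finrank_eq,
          finrank_pi_fintype]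
    _ ≤ ∑ I : MaximalSpectrum E, finrank K (torsionBySet E M I.asIdeal) :=
        Finset.sum_le_sum fun I _ => finrank_le_finrank_of_nontrivial K (E ⧸ I.asIdeal) _
    _ ≤ finrank K M := MaximalSpectrum.iSupIndep_torsionBySet.sum_finrank_le

section RationalSpan

variable {V : Type*} [AddCommGroup V] [Module ℚ V]

instance Submodule.finiteDimensional_span_rat (L : Submodule ℤ V) [Module.Finite ℤ L] :
    FiniteDimensional ℚ (span ℚ (L : Set V)) := by
  obtain ⟨s, rfl⟩ := Module.Finite.iff_fg.mp ‹Module.Finite ℤ L›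
  rw [span_span_of_tower]
  infer_instance

theorem Submodule.finrank_span_rat_eq (L : Submodule ℤ V) [Module.Free ℤ L]
    [Module.Finite ℤ L] : finrank ℚ (span ℚ (L : Set V)) = finrank ℤ L := by
  let b := Module.Free.chooseBasis ℤ L
  have hli : LinearIndependent ℚ (L.subtype ∘ b) :=
    (LinearIndependent.iff_fractionRing ℤ ℚ).mp (b.linearIndependent.map' _ L.ker_subtype)
  have hspan : span ℤ (Set.range (L.subtype ∘ b)) = L := by
    rw [Set.range_comp, ← map_span, b.span_eq, map_subtype_top]
  rw [finrank_eq_card_basis b, ← finrank_span_eq_card hli]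
  conv_lhs => rw [← hspan, span_span_of_tower]

theorem Submodule.mapsTo_span_rat {L : Submodule ℤ V} {f : V →+ V} {n : ℕ} (hn : 0 < n)
    (hf : ∀ v ∈ L, (n • f) v ∈ L) : Set.MapsTo f (span ℚ (L : Set V)) (span ℚ (L : Set V)) := by
  suffices span ℚ (L : Set V) ≤ (span ℚ (L : Set V)).comap f.toRatLinearMap from
    fun _ hv => this hv
  refine span_le.mpr fun v hv => ?_
  have : f v = (n : ℚ)⁻¹ • (n • f) v := by
    rw [AddMonoidHom.nsmul_apply, ← Nat.cast_smul_eq_nsmul ℚ, inv_smul_smul₀ (by positivity)]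
  rw [SetLike.mem_coe, mem_comap, AddMonoidHom.coe_toRatLinearMap, this]
  exact smul_mem _ _ (subset_span (hf v hv))

theorem finrank_le_finrank_of_stabilizes_lattice {R E : Type*} [Ring R] [Module R V]
    [CommRing E] [IsReduced E] [Algebra ℚ E] [FiniteDimensional ℚ E]
    (L : Submodule ℤ V) [Module.Free ℤ L] [Module.Finite ℤ L] (hL : span R (L : Set V) = ⊤)
    (ψ : E →+* Module.End R V) (hψ : Function.Injective ψ)
    (hψL : ∀ x, ∃ n : ℕ, 0 < n ∧ ∀ v ∈ L, (n • ψ x) v ∈ L) :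
    finrank ℚ E ≤ finrank ℤ L := by
  let _ : Module E V := Module.compHom V ψ
  have : IsScalarTower ℚ E V := ⟨fun q x v =>
    map_rat_smul (AddMonoidHom.mk' (fun x : E => ψ x v) fun x y => by simp) q x⟩
  let M : Submodule E V :=
    { span ℚ (L : Set V) with
      smul_mem' x _ hv :=
        have ⟨_, hn, hx⟩ := hψL x
        mapsTo_span_rat (f := (ψ x).toAddMonoidHom) hn hx hv }
  have : FiniteDimensional ℚ M := finiteDimensional_span_rat L
  have : FaithfulSMul E M := ⟨fun h => hψ <| LinearMap.ext_on hL fun v hv =>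
    congrArg Subtype.val (h ⟨v, subset_span hv⟩)⟩
  calc finrank ℚ E ≤ finrank ℚ M := finrank_le_finrank_of_faithfulSMul ℚ E M
    _ = finrank ℤ L := finrank_span_rat_eq L

end RationalSpan

attribute [instance] CAbVar.free

instance CAbVar.finite_lattice (A : CAbVar) : Module.Finite ℤ A.L := by
  rcases Nat.eq_zero_or_pos A.dim with h | h
  · have : Subsingleton A.V := Module.finrank_zero_iff.mp h
    infer_instance
  · exact Module.finite_of_finrank_pos (A.rank_eq ▸ Nat.mul_pos two_pos h)

theorem CAbVar.span_complex_lattice (A : CAbVar) : span ℂ (A.L : Set A.V) = ⊤ :=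
  (restrictScalars_eq_top_iff ℝ ℂ _).mp <| eq_top_iff.mpr <|
    A.spans ▸ span_le_restrictScalars ℝ ℂ _

/-- For any complex abelian variety `A`, the reduced degree
of `End_ℚ(A)` satisfies `[End_ℚ(A) : ℚ]_red ≤ 2 dim_ℂ A`.  (The reduced
degree equals the `ℚ`-degree of a maximal étale subalgebra of `End_ℚ(A)`; the
statement is that every étale — i.e. commutative reduced — `ℚ`-subalgebra of
`End_ℚ(A)` has degree at most `2 dim_ℂ A`.) -/
theorem reduced_degree_le_twice_dim
    (A : CAbVar) (S : QSubalg A) (hetale : IsReduced S.E) :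
    Module.finrank ℚ S.E ≤ 2 * A.dim := by
  -- Any `ℚ`-structure on `V` will do, since additive maps are automatically `ℚ`-linear.
  let _ : Module ℚ A.V := Module.compHom A.V (algebraMap ℚ ℝ)
  exact (finrank_le_finrank_of_stabilizes_lattice A.L A.span_complex_lattice S.ψ S.inj
    S.mem).trans_eq A.rank_eq
end

section
/- The only solutions in positive integers d ≥ 1, k ≥ 1 and integers u ≥ 0 of the equation u + 2k − 1 = d·(k(k+1)/2 + u·k) are: (d,k,u) = (1, 2, 0) and (d, k, u) = (1, 1, u) for any u ≥ 0. -/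
/-- The only solutions in positive integers `d ≥ 1`,
`k ≥ 1` and integers `u ≥ 0` of the equation
`u + 2k − 1 = d·(k(k+1)/2 + u·k)` are `(d,k,u) = (1,2,0)` and
`(d,k,u) = (1,1,u)` for any `u ≥ 0`.  (Note `k(k+1)/2` is an exact natural
division.) -/
theorem dimension_equation_solutions (d k u : ℕ) (hd : 1 ≤ d) (hk : 1 ≤ k) :
    u + 2 * k - 1 = d * (k * (k + 1) / 2 + u * k)
      ↔ ((d = 1 ∧ k = 2 ∧ u = 0) ∨ (d = 1 ∧ k = 1)) := by
  constructor
  · intro h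
    rcases Nat.lt_or_ge k 3 with hk3 | hk3
    · -- k = 1 or k = 2
      interval_cases k
      · -- k = 1
        norm_num at h
        rcases Nat.lt_or_ge d 2 with hd2 | hd2
        · interval_cases d
          right; exact ⟨rfl, rfl⟩
        · exfalso
          have : 2 * (1 + u) ≤ d * (1 + u) := Nat.mul_le_mul_right _ hd2
          omega
      · -- k = 2
        norm_num at h
        rcases Nat.lt_or_ge d 2 with hd2 | hd2
        · interval_cases d
          left; omega
        · exfalso
          have : 2 * (3 + u * 2) ≤ d * (3 + u * 2) := Nat.mul_le_mul_right _ hd2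
          omega
    · exfalso
      set m := k * (k + 1) / 2 with hmdef
      have hm : 2 * m = k * (k + 1) := by
        rw [hmdef, Nat.mul_div_cancel' ]
        exact (Nat.even_mul_succ_self k).two_dvd
      have hmk : 2 * k ≤ m := by nlinarith
      have hu : u ≤ u * k := Nat.le_mul_of_pos_right u hk
      have hS : m + u * k ≤ d * (m + u * k) := Nat.le_mul_of_pos_left _ hd
      omega
  · rintro (⟨rfl, rfl, rfl⟩ | ⟨rfl, rfl⟩) <;> norm_num <;> omega
end
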